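/- Let A = (A1 A2) ∈ ℝ^{m×n} with A1 ∈ ℝ^{m×k} of full rank k. For weight matrices W = (W1 W2), with W1 having positive entries and W2 staying bounded, let (X̃1(W) X̃2(W)) be a minimizer of ‖((A1 A2) − (X1 X2)) ⊙ (W1 W2)‖_F² over (X1 X2) with rank(X1 X2) ≤ r, and set λ = min_{i,j}(W1)_{ij}. Then ‖P_{X̃1(W)}(A2) − P_{A1}(A2)‖_F = O(1/λ) as λ → ∞; i.e., there exist constants C > 0 and λ0 > 0 such that λ ≥ λ0 implies ‖P_{X̃1(W)}(A2) − P_{A1}(A2)‖_F ≤ C/λ. -/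

import Mathlib

open Matrix Filter Topology

noncomputable def frob {α β : Type*} [Fintype α] [Fintype β] (M : Matrix α β ℝ) : ℝ :=
  Real.sqrt (∑ i, ∑ j, (M i j) ^ 2)

noncomputable def projCol {m k : ℕ} (B : Matrix (Fin m) (Fin k) ℝ) :
    Matrix (Fin m) (Fin m) ℝ :=
  B * (Bᵀ * B)⁻¹ * Bᵀ

/-!
Comparing the minimizer `(X₁, X₂)` with the admissible competitor `(A₁, P_{A₁} A₂)`, whose rank
is at most `k ≤ r`, gives `λ² ‖A₁ - X₁‖² ≤ ρ² ‖A₂ - P_{A₁} A₂‖²`, so `‖A₁ - X₁‖ = O(1/λ)`.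
Since `A₁ᵀ A₁` is invertible, `X ↦ P_X = X (XᵀX)⁻¹ Xᵀ` is differentiable at `A₁`, hence Lipschitz
near `A₁`, and the bound transfers to `‖P_{X₁} A₂ - P_{A₁} A₂‖`.
-/

attribute [local instance] Matrix.frobeniusNormedAddCommGroup Matrix.frobeniusNormedSpace
  Matrix.frobeniusNormedRing Matrix.frobeniusNormedAlgebra

section Frobenius

variable {α β : Type*} [Fintype α] [Fintype β]

lemma frob_eq_norm (M : Matrix α β ℝ) : frob M = ‖M‖ := by
  rw [frob, Matrix.frobenius_norm_def, Real.sqrt_eq_rpow]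
  congr 1
  refine Finset.sum_congr rfl fun i _ => Finset.sum_congr rfl fun j _ => ?_
  rw [Real.norm_eq_abs, Real.rpow_two, sq_abs]

lemma frob_nonneg (M : Matrix α β ℝ) : 0 ≤ frob M :=
  Real.sqrt_nonneg _

lemma frob_sq (M : Matrix α β ℝ) : frob M ^ 2 = ∑ i, ∑ j, M i j ^ 2 :=
  Real.sq_sqrt (by positivity)

lemma frob_hadamard_sq_le {c : ℝ} (M W : Matrix α β ℝ) (hW : ∀ i j, W i j ^ 2 ≤ c) :
    frob (M ⊙ W) ^ 2 ≤ c * frob M ^ 2 := by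
  simp only [frob_sq, Finset.mul_sum, hadamard_apply, mul_pow]
  refine Finset.sum_le_sum fun i _ => Finset.sum_le_sum fun j _ => ?_
  nlinarith [hW i j, sq_nonneg (M i j)]

lemma le_frob_hadamard_sq {c : ℝ} (M W : Matrix α β ℝ) (hW : ∀ i j, c ≤ W i j ^ 2) :
    c * frob M ^ 2 ≤ frob (M ⊙ W) ^ 2 := by
  simp only [frob_sq, Finset.mul_sum, hadamard_apply, mul_pow]
  refine Finset.sum_le_sum fun i _ => Finset.sum_le_sum fun j _ => ?_
  nlinarith [hW i j, sq_nonneg (M i j)]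

end Frobenius

lemma Matrix.isUnit_of_rank_eq {n K : Type*} [Fintype n] [DecidableEq n] [Field K]
    {A : Matrix n n K} (h : A.rank = Fintype.card n) : IsUnit A := by
  have hrange : LinearMap.range A.mulVecLin = ⊤ :=
    Submodule.eq_top_of_finrank_eq (by rw [← Matrix.rank, h, Module.finrank_fintype_fun_eq_card])
  rw [← mulVec_surjective_iff_isUnit]
  exact LinearMap.range_eq_top.mp hrange

lemma Matrix.isBoundedBilinearMap_mul {l m n : Type*} [Fintype l] [Fintype m] [Fintype n] :
    IsBoundedBilinearMap ℝ (fun p : Matrix l m ℝ × Matrix m n ℝ => p.1 * p.2) where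
  add_left := Matrix.add_mul
  smul_left := Matrix.smul_mul
  add_right := Matrix.mul_add
  smul_right c x y := Matrix.mul_smul x c y
  bound := ⟨1, one_pos, fun x y => by simpa using frobenius_norm_mul x y⟩

lemma DifferentiableAt.matrix_mul {E : Type*} [NormedAddCommGroup E] [NormedSpace ℝ E]
    {l m n : Type*} [Fintype l] [Fintype m] [Fintype n]
    {f : E → Matrix l m ℝ} {g : E → Matrix m n ℝ} {x : E}
    (hf : DifferentiableAt ℝ f x) (hg : DifferentiableAt ℝ g x) :
    DifferentiableAt ℝ (fun y => f y * g y) x :=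
  DifferentiableAt.comp (g := fun p : Matrix l m ℝ × Matrix m n ℝ => p.1 * p.2) x
    (Matrix.isBoundedBilinearMap_mul.differentiableAt (f x, g x)) (hf.prodMk hg)

lemma differentiableAt_matrix_transpose {m n : Type*} [Fintype m] [Fintype n]
    (A : Matrix m n ℝ) : DifferentiableAt ℝ (fun X : Matrix m n ℝ => Xᵀ) A :=
  (LinearMap.toContinuousLinearMap (transposeLinearEquiv m n ℝ ℝ).toLinearMap).differentiableAt

lemma differentiableAt_projCol {m k : ℕ} {A : Matrix (Fin m) (Fin k) ℝ}
    (hA : IsUnit (Aᵀ * A)) : DifferentiableAt ℝ projCol A := by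
  have hinv : DifferentiableAt ℝ (fun Y : Matrix (Fin k) (Fin k) ℝ => Y⁻¹) (Aᵀ * A) := by
    rw [show (fun Y => Y⁻¹) = Ring.inverse from funext nonsing_inv_eq_ringInverse]
    exact differentiableAt_inverse hA
  have hgram : DifferentiableAt ℝ (fun X : Matrix (Fin m) (Fin k) ℝ => Xᵀ * X) A :=
    (differentiableAt_matrix_transpose A).matrix_mul differentiableAt_id
  exact (differentiableAt_id.matrix_mul (hinv.comp (f := fun X => Xᵀ * X) A hgram)).matrix_mul
    (differentiableAt_matrix_transpose A)

lemma DifferentiableAt.exists_norm_sub_le {E F : Type*} [NormedAddCommGroup E] [NormedSpace ℝ E]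
    [NormedAddCommGroup F] [NormedSpace ℝ F] {f : E → F} {x : E} (hf : DifferentiableAt ℝ f x) :
    ∃ K ≥ (0 : ℝ), ∃ ε > (0 : ℝ), ∀ y, ‖y - x‖ < ε → ‖f y - f x‖ ≤ K * ‖y - x‖ := by
  obtain ⟨K, hK, hbound⟩ := hf.isBigO_sub.exists_nonneg
  obtain ⟨ε, hε, hball⟩ := Metric.eventually_nhds_iff.mp hbound.bound
  exact ⟨K, hK, ε, hε, fun y hy => hball (by rwa [dist_eq_norm])⟩

lemma rank_fromCols_projCol_mul_le {m k l : ℕ} (A : Matrix (Fin m) (Fin k) ℝ)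
    (B : Matrix (Fin m) (Fin l) ℝ) : (fromCols A (projCol A * B)).rank ≤ A.rank := by
  have h : fromCols A (projCol A * B) = A * fromCols 1 ((Aᵀ * A)⁻¹ * (Aᵀ * B)) := by
    simp only [mul_fromCols, Matrix.mul_one, projCol, Matrix.mul_assoc]
  rw [h]
  exact rank_mul_le_left _ _

lemma mul_frob_sub_le_of_cost_le {m k l : ℕ} {A1 X1 W1 : Matrix (Fin m) (Fin k) ℝ}
    {A2 X2 Y2 W2 : Matrix (Fin m) (Fin l) ℝ} {lam ρ : ℝ} (hlam : 0 ≤ lam)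
    (hW1 : ∀ i j, lam ≤ W1 i j) (hW2 : ∀ i j, |W2 i j| ≤ ρ)
    (hcost : frob ((A1 - X1) ⊙ W1) ^ 2 + frob ((A2 - X2) ⊙ W2) ^ 2 ≤
      frob ((A1 - A1) ⊙ W1) ^ 2 + frob ((A2 - Y2) ⊙ W2) ^ 2) :
    lam * frob (A1 - X1) ≤ |ρ| * frob (A2 - Y2) := by
  have hX1 := le_frob_hadamard_sq (A1 - X1) W1 fun i j => pow_le_pow_left₀ hlam (hW1 i j) 2
  have hY2 := frob_hadamard_sq_le (A2 - Y2) W2 fun i j => sq_le_sq' (abs_le.mp (hW2 i j)).1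
    (abs_le.mp (hW2 i j)).2
  have hzero : frob ((A1 - A1) ⊙ W1) = 0 := by simp [frob]
  rw [hzero] at hcost
  rw [← sq_le_sq₀ (mul_nonneg hlam (frob_nonneg _)) (mul_nonneg (abs_nonneg ρ) (frob_nonneg _)),
    mul_pow, mul_pow, sq_abs]
  linarith [sq_nonneg (frob ((A2 - X2) ⊙ W2))]

theorem stmt_6_general {m k l : ℕ}
    (A1 : Matrix (Fin m) (Fin k) ℝ) (A2 : Matrix (Fin m) (Fin l) ℝ)
    (r : ℕ) (hrank : A1.rank = k) (hkr : k ≤ r)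
    (ρ : ℝ) :
    ∃ C > (0 : ℝ), ∃ lam0 > (0 : ℝ),
      ∀ (W1 : Matrix (Fin m) (Fin k) ℝ) (W2 : Matrix (Fin m) (Fin l) ℝ) (lam : ℝ)
        (X1 : Matrix (Fin m) (Fin k) ℝ) (X2 : Matrix (Fin m) (Fin l) ℝ),
        (∀ i j, 0 < W1 i j) → (∀ i j, |W2 i j| ≤ ρ) →
        (∀ i j, lam ≤ W1 i j) → (∃ i j, W1 i j = lam) → lam0 ≤ lam →
        ((Matrix.fromCols X1 X2).rank ≤ r ∧
          ∀ (Y1 : Matrix (Fin m) (Fin k) ℝ) (Y2 : Matrix (Fin m) (Fin l) ℝ),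
            (Matrix.fromCols Y1 Y2).rank ≤ r →
            frob (Matrix.hadamard (A1 - X1) W1) ^ 2 +
                frob (Matrix.hadamard (A2 - X2) W2) ^ 2 ≤
              frob (Matrix.hadamard (A1 - Y1) W1) ^ 2 +
                frob (Matrix.hadamard (A2 - Y2) W2) ^ 2) →
        frob (projCol X1 * A2 - projCol A1 * A2) ≤ C / lam := by
  have hgram : IsUnit (A1ᵀ * A1) :=
    isUnit_of_rank_eq (by rw [rank_transpose_mul_self, hrank, Fintype.card_fin])
  obtain ⟨K, hK, ε, hε, hproj⟩ := (differentiableAt_projCol hgram).exists_norm_sub_le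
  set D := |ρ| * frob (A2 - projCol A1 * A2)
  have hD : 0 ≤ D := mul_nonneg (abs_nonneg ρ) (frob_nonneg _)
  refine ⟨K * D * ‖A2‖ + 1, by positivity, D / ε + 1, by positivity, ?_⟩
  rintro W1 W2 lam X1 X2 - hW2 hW1 - hlam ⟨-, hmin⟩
  have hlam_pos : 0 < lam := by linarith [div_nonneg hD hε.le]
  have hcompetitor : (fromCols A1 (projCol A1 * A2)).rank ≤ r :=
    (rank_fromCols_projCol_mul_le A1 A2).trans (hrank.trans_le hkr)
  have hX1 : ‖X1 - A1‖ ≤ D / lam := by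
    rw [← norm_neg, neg_sub, ← frob_eq_norm, le_div_iff₀' hlam_pos]
    exact mul_frob_sub_le_of_cost_le hlam_pos.le hW1 hW2 (hmin _ _ hcompetitor)
  have hX1ε : ‖X1 - A1‖ < ε := by
    refine hX1.trans_lt ((div_lt_iff₀ hlam_pos).2 ?_)
    nlinarith [div_mul_cancel₀ D hε.ne']
  calc frob (projCol X1 * A2 - projCol A1 * A2) = ‖(projCol X1 - projCol A1) * A2‖ := by
        rw [frob_eq_norm, Matrix.sub_mul]
    _ ≤ K * ‖X1 - A1‖ * ‖A2‖ :=
        (frobenius_norm_mul _ _).trans (by gcongr; exact hproj X1 hX1ε)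
    _ ≤ K * (D / lam) * ‖A2‖ := by gcongr
    _ = K * D * ‖A2‖ / lam := by ring
    _ ≤ (K * D * ‖A2‖ + 1) / lam := by gcongr; linarith

/-- **Lemma 3.6 (ii).** For minimizers of the weighted low rank problem with `W1` positive
and `W2` bounded (by `ρ`), `‖P_{X̃1(W)}(A2) − P_{A1}(A2)‖_F = O(1/λ)` as
`λ = min_{i,j}(W1)_{ij} → ∞`: there are `C > 0` and `λ0 > 0` such that `λ ≥ λ0` implies
`‖P_{X̃1(W)}(A2) − P_{A1}(A2)‖_F ≤ C/λ`. -/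
theorem stmt_6 {m k l : ℕ}
    (A1 : Matrix (Fin m) (Fin k) ℝ) (A2 : Matrix (Fin m) (Fin l) ℝ)
    (r : ℕ) (hrank : A1.rank = k) (hkr : k ≤ r) (hrmn : r ≤ min m (k + l))
    (ρ : ℝ) (hρ : 0 < ρ) :
    ∃ C > (0 : ℝ), ∃ lam0 > (0 : ℝ),
      ∀ (W1 : Matrix (Fin m) (Fin k) ℝ) (W2 : Matrix (Fin m) (Fin l) ℝ) (lam : ℝ)
        (X1 : Matrix (Fin m) (Fin k) ℝ) (X2 : Matrix (Fin m) (Fin l) ℝ),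
        (∀ i j, 0 < W1 i j) → (∀ i j, |W2 i j| ≤ ρ) →
        (∀ i j, lam ≤ W1 i j) → (∃ i j, W1 i j = lam) → lam0 ≤ lam →
        ((Matrix.fromCols X1 X2).rank ≤ r ∧
          ∀ (Y1 : Matrix (Fin m) (Fin k) ℝ) (Y2 : Matrix (Fin m) (Fin l) ℝ),
            (Matrix.fromCols Y1 Y2).rank ≤ r →
            frob (Matrix.hadamard (A1 - X1) W1) ^ 2 +
                frob (Matrix.hadamard (A2 - X2) W2) ^ 2 ≤
              frob (Matrix.hadamard (A1 - Y1) W1) ^ 2 +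
                frob (Matrix.hadamard (A2 - Y2) W2) ^ 2) →
        frob (projCol X1 * A2 - projCol A1 * A2) ≤ C / lam :=
  stmt_6_general A1 A2 r hrank hkr ρ
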